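/- Let X ⊆ ℝ^n be nonempty, convex, compact and symmetric, let α₁, …, α_l > 0 be real numbers, let A*₁, …, A*_l be real n×n matrices, and let ν ∈ ℕ. Then { ∑_{i=1}^l A*_i (∑_{j=ν+1}^∞ c_j^{α_i} x_{i,j}) : x_{i,j} ∈ X for all i, j } = Ψ_ν(α₁)·(A*₁X) ⊕ ⋯ ⊕ Ψ_ν(α_l)·(A*_lX), where A*_iX denotes the image of X under A*_i and ⊕ is the Minkowski sum. -/

import Mathlib

/-! The Grünwald–Letnikov coefficients are absolutely summable, since
`(j + 1) |c_{j+1}| = (j - α) |c_j|` for `j ≥ α` makes `α |c_j|` telescope. Writing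
`c_j x_j = |c_j| y_j` with `y_j = ± x_j ∈ X`, the series `∑ c_j x_j` is `Ψ` times an
infinite convex combination of points of `X`, which stays in `X` because `X` is closed and
convex; conversely `Ψ w = ∑ c_j (± w)` for every `w ∈ X`. Applying `A*_i` and summing
over `i` gives the Minkowski sum. -/

open scoped Pointwise BigOperators

open Filter Topology Finset

/-- Grünwald–Letnikov coefficients: `c_j^α = (-1)^j C(α,j) = ∏_{i=0}^{j-1} (i-α)/(i+1)`. -/
noncomputable def glCoef (α : ℝ) (j : ℕ) : ℝ :=
  ∏ i ∈ Finset.range j, ((i : ℝ) - α) / ((i : ℝ) + 1)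

/-- `Ψ_ν(α) = ∑_{j=ν+1}^∞ |c_j^α|`. -/
noncomputable def Psi (α : ℝ) (ν : ℕ) : ℝ :=
  ∑' j : ℕ, |glCoef α (ν + 1 + j)|

lemma summable_of_le_sub_succ {a b : ℕ → ℝ} (ha : ∀ j, 0 ≤ a j) (hb : ∀ j, 0 ≤ b j)
    (hab : ∀ j, a j ≤ b j - b (j + 1)) : Summable a :=
  summable_of_sum_range_le ha fun n =>
    calc ∑ j ∈ range n, a j ≤ ∑ j ∈ range n, (b j - b (j + 1)) := sum_le_sum fun j _ => hab j
      _ = b 0 - b n := sum_range_sub' b n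
      _ ≤ b 0 := sub_le_self _ (hb n)

lemma glCoef_succ (α : ℝ) (j : ℕ) :
    glCoef α (j + 1) = glCoef α j * (((j : ℝ) - α) / ((j : ℝ) + 1)) :=
  prod_range_succ _ _

lemma succ_mul_abs_glCoef_succ {α : ℝ} {j : ℕ} (hj : α ≤ j) :
    ((j : ℝ) + 1) * |glCoef α (j + 1)| = ((j : ℝ) - α) * |glCoef α j| := by
  rw [glCoef_succ, abs_mul, abs_of_nonneg (div_nonneg (sub_nonneg.2 hj) (by positivity))]
  field_simp

lemma summable_abs_glCoef {α : ℝ} (hα : 0 < α) : Summable fun j => |glCoef α j| := by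
  set N := ⌈α⌉₊
  refine (summable_nat_add_iff N).1 <| summable_of_le_sub_succ (fun j => abs_nonneg _)
    (b := fun j => ((j + N : ℕ) : ℝ) * |glCoef α (j + N)| / α)
    (fun j => by positivity) fun j => le_of_eq ?_
  have hrec := succ_mul_abs_glCoef_succ (α := α) (j := j + N)
    (le_trans (Nat.le_ceil α) (by exact_mod_cast Nat.le_add_left N j))
  rw [show j + 1 + N = j + N + 1 by omega]
  push_cast at hrec ⊢
  rw [hrec]
  field_simp
  ring

section SymmetricSet

variable {E : Type*} [AddCommGroup E] [Module ℝ E] {X : Set E}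

lemma exists_mem_abs_smul_eq_smul (hsym : ∀ x ∈ X, -x ∈ X) {x : E} (hx : x ∈ X) (c : ℝ) :
    ∃ y ∈ X, |c| • y = c • x := by
  rcases abs_choice c with h | h
  · exact ⟨x, hx, by rw [h]⟩
  · exact ⟨-x, hsym x hx, by rw [h, smul_neg, neg_smul, neg_neg]⟩

lemma exists_mem_smul_eq_abs_smul (hsym : ∀ x ∈ X, -x ∈ X) {x : E} (hx : x ∈ X) (c : ℝ) :
    ∃ y ∈ X, c • y = |c| • x := by
  rcases abs_choice c with h | h
  · exact ⟨x, hx, by rw [h]⟩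
  · exact ⟨-x, hsym x hx, by rw [h, smul_neg, neg_smul]⟩

end SymmetricSet

section InfiniteConvexCombination

variable {ι E : Type*} [AddCommGroup E] [Module ℝ E] [TopologicalSpace E]
  [ContinuousSMul ℝ E] {X : Set E}

lemma Convex.mem_of_hasSum_smul (hconv : Convex ℝ X) (hclosed : IsClosed X) {w : ι → ℝ}
    {y : ι → E} {z : E} (hw0 : ∀ j, 0 ≤ w j) (hw : HasSum w 1) (hy : ∀ j, y j ∈ X)
    (hz : HasSum (fun j => w j • y j) z) : z ∈ X := by
  have hlim : Tendsto (fun s : Finset ι => s.centerMass w y) atTop (𝓝 z) := by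
    simpa [Finset.centerMass] using (hw.inv₀ one_ne_zero).smul hz
  refine hclosed.mem_of_tendsto hlim ?_
  filter_upwards [hw.eventually (eventually_gt_nhds one_pos)] with s hs
  exact hconv.centerMass_mem (fun j _ => hw0 j) hs fun j _ => hy j

lemma mem_smul_set_of_hasSum_smul [T2Space E] [Nonempty ι] (hconv : Convex ℝ X)
    (hclosed : IsClosed X) (hsym : ∀ x ∈ X, -x ∈ X) {c : ι → ℝ} {T : ℝ}
    (hc : HasSum (fun j => |c j|) T) {x : ι → E} {z : E} (hx : ∀ j, x j ∈ X)
    (hz : HasSum (fun j => c j • x j) z) : z ∈ T • X := by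
  choose y hyX hy using fun j => exists_mem_abs_smul_eq_smul hsym (hx j) (c j)
  rcases (hc.nonneg fun j => abs_nonneg (c j)).eq_or_lt with hT | hT
  · subst hT
    have hc0 : ∀ j, c j = 0 := fun j =>
      abs_eq_zero.1 (congrFun ((hasSum_zero_iff_of_nonneg fun j => abs_nonneg _).1 hc) j)
    obtain rfl : z = 0 := hz.unique (by simp [hc0])
    exact ⟨x (Classical.arbitrary ι), hx _, zero_smul _ _⟩
  · rw [Set.mem_smul_set_iff_inv_smul_mem₀ hT.ne']
    refine hconv.mem_of_hasSum_smul hclosed (w := fun j => T⁻¹ * |c j|)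
      (fun j => by positivity) (by simpa [hT.ne'] using hc.mul_left T⁻¹) hyX ?_
    simpa [mul_smul, hy] using hz.const_smul T⁻¹

end InfiniteConvexCombination

lemma Summable.smul_of_norm_le {ι E : Type*} [NormedAddCommGroup E] [NormedSpace ℝ E]
    [CompleteSpace E] {c : ι → ℝ} (hc : Summable fun j => |c j|) {x : ι → E} {M : ℝ}
    (hM : ∀ j, ‖x j‖ ≤ M) : Summable fun j => c j • x j :=
  .of_norm_bounded (hc.mul_right M) fun j => by
    rw [norm_smul, Real.norm_eq_abs]
    exact mul_le_mul_of_nonneg_left (hM j) (abs_nonneg _)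

theorem disturbance_set_formula_general (n l : ℕ) (α : Fin l → ℝ) (hα : ∀ i, 0 < α i)
    (A : Fin l → (EuclideanSpace ℝ (Fin n) →L[ℝ] EuclideanSpace ℝ (Fin n)))
    (ν : ℕ) (X : Set (EuclideanSpace ℝ (Fin n)))
    (hconv : Convex ℝ X) (hcomp : IsCompact X) (hsym : ∀ x ∈ X, -x ∈ X) :
    {d : EuclideanSpace ℝ (Fin n) |
        ∃ x : Fin l → ℕ → EuclideanSpace ℝ (Fin n),
          (∀ i : Fin l, ∀ j : ℕ, x i j ∈ X) ∧
          d = ∑ i : Fin l, A i (∑' j : ℕ, glCoef (α i) (ν + 1 + j) • x i j)} =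
      ∑ i : Fin l, Psi (α i) ν • ((A i) '' X) := by
  set c : Fin l → ℕ → ℝ := fun i j => glCoef (α i) (ν + 1 + j)
  have hc : ∀ i, Summable fun j => |c i j| := fun i => by
    simpa [c, add_comm] using (summable_nat_add_iff (ν + 1)).2 (summable_abs_glCoef (hα i))
  obtain ⟨M, hM⟩ := isBounded_iff_forall_norm_le.1 hcomp.isBounded
  ext d
  simp only [Set.mem_ofPred_eq, Set.mem_fintype_sum]
  constructor
  · rintro ⟨x, hx, rfl⟩
    refine ⟨_, fun i => ?_, rfl⟩
    obtain ⟨w, hw, hw_eq⟩ := mem_smul_set_of_hasSum_smul hconv hcomp.isClosed hsym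
      (hc i).hasSum (hx i) ((hc i).smul_of_norm_le fun j => hM _ (hx i j)).hasSum
    rw [← hw_eq, map_smul]
    exact Set.smul_mem_smul_set (Set.mem_image_of_mem _ hw)
  · rintro ⟨g, hg, rfl⟩
    have hpre : ∀ i, ∃ v ∈ X, Psi (α i) ν • A i v = g i := fun i => by
      obtain ⟨_, ⟨v, hv, rfl⟩, h⟩ := hg i
      exact ⟨v, hv, h⟩
    choose v hvX hv using hpre
    choose y hyX hy using fun i j => exists_mem_smul_eq_abs_smul hsym (hvX i) (c i j)
    refine ⟨y, hyX, sum_congr rfl fun i _ => ?_⟩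
    rw [← hv, ← map_smul, Psi, ← (hc i).tsum_smul_const]
    exact congrArg (A i) (tsum_congr (hy i)).symm

/-- For a nonempty, convex, compact, symmetric set `X ⊆ ℝ^n`, fractional orders
`α₁,…,α_l > 0` and matrices (linear maps) `A*₁,…,A*_l`, the set of all sums
`∑_i A*_i (∑_{j=ν+1}^∞ c_j^{α_i} x_{i,j})` with `x_{i,j} ∈ X` equals the finite
Minkowski sum `Ψ_ν(α₁)·(A*₁X) ⊕ ⋯ ⊕ Ψ_ν(α_l)·(A*_lX)`. -/
theorem disturbance_set_formula (n l : ℕ) (α : Fin l → ℝ) (hα : ∀ i, 0 < α i)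
    (A : Fin l → (EuclideanSpace ℝ (Fin n) →L[ℝ] EuclideanSpace ℝ (Fin n)))
    (ν : ℕ) (X : Set (EuclideanSpace ℝ (Fin n))) (hne : X.Nonempty)
    (hconv : Convex ℝ X) (hcomp : IsCompact X) (hsym : ∀ x ∈ X, -x ∈ X) :
    {d : EuclideanSpace ℝ (Fin n) |
        ∃ x : Fin l → ℕ → EuclideanSpace ℝ (Fin n),
          (∀ i : Fin l, ∀ j : ℕ, x i j ∈ X) ∧
          d = ∑ i : Fin l, A i (∑' j : ℕ, glCoef (α i) (ν + 1 + j) • x i j)} =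
      ∑ i : Fin l, Psi (α i) ν • ((A i) '' X) :=
  disturbance_set_formula_general n l α hα A ν X hconv hcomp hsym
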